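/- arXiv:0712.2870 — 4 statements merged into one kernel-verified Lean document; each statement's English description precedes it below -/
import Mathlib

section
/- Let p and q be probability distributions on a finite set X with ||p - q||_1 ≤ 1/2. Then |H(p) - H(q)| ≤ ||p-q||_1 · ln(|X| / ||p-q||_1), where H denotes Shannon entropy in nats. -/
/-!
Write `η = negMulLog`, so that `H(p) = ∑ₓ η (p x)`. Since `η` is concave, its increments over
intervals of a fixed length `t` decrease along `[0, 1]`; the extreme ones are `η t - η 0 = η t` and
`η 1 - η (1 - t) = -η (1 - t)`, and `η (1 - t) ≤ η t` for `t ≤ 1/2`. Hence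
`|η a - η b| ≤ η |a - b|` whenever `|a - b| ≤ 1/2`, and `|H(p) - H(q)| ≤ ∑ₓ η |p x - q x|`.
Jensen's inequality for `η` with uniform weights bounds the last sum by `d log (|X| / d)`,
where `d = ‖p - q‖₁`.
-/

open BigOperators Finset Real

def IsPMF {X : Type*} [Fintype X] (p : X → ℝ) : Prop :=
  (∀ x, 0 ≤ p x) ∧ ∑ x, p x = 1

noncomputable def ent {α : Type*} [Fintype α] (p : α → ℝ) : ℝ :=
  -∑ a, p a * Real.log (p a)

theorem ConcaveOn.map_add_sub_map_le {𝕜 : Type*} [Field 𝕜] [LinearOrder 𝕜]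
    [IsStrictOrderedRing 𝕜] {s : Set 𝕜} {f : 𝕜 → 𝕜} (hf : ConcaveOn 𝕜 s f) {x y t : 𝕜}
    (hx : x ∈ s) (hyt : y + t ∈ s) (hxy : x ≤ y) (ht : 0 ≤ t) :
    f (y + t) - f y ≤ f (x + t) - f x := by
  rcases (add_nonneg (sub_nonneg.2 hxy) ht).eq_or_lt with hD | hD
  · obtain rfl : x = y := by linarith
    obtain rfl : t = 0 := by linarith
    simp
  -- `y` and `x + t` are the convex combinations of `x` and `y + t` with swapped weights.
  set a := t / (y - x + t)
  set b := (y - x) / (y - x + t)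
  have hab : a + b = 1 := by simp only [a, b]; field_simp; ring
  have y_eq : a • x + b • (y + t) = y := by simp only [a, b, smul_eq_mul]; field_simp; ring
  have xt_eq : b • x + a • (y + t) = x + t := by simp only [a, b, smul_eq_mul]; field_simp; ring
  have hy := hf.2 hx hyt (div_nonneg ht hD.le) (div_nonneg (sub_nonneg.2 hxy) hD.le) hab
  have hxt := hf.2 hx hyt (div_nonneg (sub_nonneg.2 hxy) hD.le) (div_nonneg ht hD.le)
    (by rw [add_comm, hab])
  rw [y_eq, smul_eq_mul, smul_eq_mul] at hy
  rw [xt_eq, smul_eq_mul, smul_eq_mul] at hxt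
  linear_combination hy + hxt - (f x + f (y + t)) * hab

open Set in
theorem negMulLog_add_le {a t : ℝ} (ha : 0 ≤ a) (ht : 0 ≤ t) :
    negMulLog (a + t) ≤ negMulLog a + negMulLog t := by
  have := concaveOn_negMulLog.map_add_sub_map_le (x := 0) self_mem_Ici
    (mem_Ici.2 (by positivity)) ha ht
  simp only [zero_add, negMulLog_zero, sub_zero] at this
  linarith

theorem negMulLog_one_sub_le {t : ℝ} (ht₀ : 0 ≤ t) (ht : t ≤ 1 / 2) :
    negMulLog (1 - t) ≤ negMulLog t := by
  set φ : ℝ → ℝ := fun s ↦ negMulLog s - negMulLog (1 - s)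
  have hφ' : ∀ s ∈ Set.Ioo (0 : ℝ) (1 / 2), HasDerivAt φ (-(2 + log (s * (1 - s)))) s := by
    intro s ⟨hs₀, hs⟩
    have h1 := (hasDerivAt_negMulLog (by linarith : 1 - s ≠ 0)).comp s
      ((hasDerivAt_id s).const_sub 1)
    refine ((hasDerivAt_negMulLog hs₀.ne').sub h1).congr_deriv ?_
    rw [log_mul hs₀.ne' (by linarith)]
    ring
  -- `φ' = -(2 + log (s (1 - s)))` decreases because `s (1 - s)` increases on `[0, 1/2]`.
  have hφ : ConcaveOn ℝ (Set.Icc 0 (1 / 2)) φ := by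
    refine AntitoneOn.concaveOn_of_deriv (convex_Icc _ _) (by fun_prop) ?_ ?_ <;>
      rw [interior_Icc]
    · exact fun s hs ↦ (hφ' s hs).differentiableAt.differentiableWithinAt
    · intro s hs u hu hsu
      rw [(hφ' s hs).deriv, (hφ' u hu).deriv]
      have : log (s * (1 - s)) ≤ log (u * (1 - u)) :=
        log_le_log (mul_pos hs.1 (by linarith [hs.2])) (by nlinarith [hs.2, hu.2])
      linarith
  have := hφ.min_le_of_mem_Icc (x := 0) (y := 1 / 2) (by norm_num) (by norm_num) ⟨ht₀, ht⟩
  norm_num [φ] at this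
  linarith

open Set in
theorem negMulLog_sub_negMulLog_add_le {a t : ℝ} (ha : 0 ≤ a) (ht₀ : 0 ≤ t) (ht : t ≤ 1 / 2)
    (hat : a + t ≤ 1) : negMulLog a - negMulLog (a + t) ≤ negMulLog t := by
  -- The increment `η a - η (a + t)` is largest when `a + t = 1`.
  have := concaveOn_negMulLog.map_add_sub_map_le (y := 1 - t) (mem_Ici.2 ha)
    (mem_Ici.2 (by linarith)) (by linarith) ht₀
  rw [sub_add_cancel, negMulLog_one] at this
  linarith [negMulLog_one_sub_le ht₀ ht]

theorem abs_negMulLog_sub_le {a b : ℝ} (ha : 0 ≤ a) (hb : 0 ≤ b) (ha₁ : a ≤ 1) (hb₁ : b ≤ 1)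
    (hab : |a - b| ≤ 1 / 2) : |negMulLog a - negMulLog b| ≤ negMulLog |a - b| := by
  wlog h : a ≤ b generalizing a b
  · rw [abs_sub_comm, abs_sub_comm a]
    exact this hb ha hb₁ ha₁ (by rwa [abs_sub_comm]) (le_of_not_ge h)
  obtain ⟨t, ht, rfl⟩ : ∃ t, 0 ≤ t ∧ b = a + t := ⟨b - a, by linarith, by ring⟩
  rw [show a - (a + t) = -t by ring, abs_neg, abs_of_nonneg ht] at hab ⊢
  rw [abs_le]
  constructor
  · linarith [negMulLog_add_le ha ht]
  · exact negMulLog_sub_negMulLog_add_le ha ht hab hb₁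

theorem sum_negMulLog_le_mul_log_card_div {X : Type*} [Fintype X] {r : X → ℝ}
    (hr : ∀ x, 0 ≤ r x) :
    ∑ x, negMulLog (r x) ≤ (∑ x, r x) * log (Fintype.card X / ∑ x, r x) := by
  cases isEmpty_or_nonempty X
  · simp
  have hn : (0 : ℝ) < Fintype.card X := by exact_mod_cast Fintype.card_pos
  have := concaveOn_negMulLog.le_map_sum (t := univ) (w := fun _ ↦ (Fintype.card X : ℝ)⁻¹)
    (p := r) (fun _ _ ↦ by positivity) (by simp [hn.ne']) (fun x _ ↦ hr x)
  simp only [smul_eq_mul, ← mul_sum] at this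
  have hlog : log ((Fintype.card X : ℝ)⁻¹ * ∑ x, r x) = -log (Fintype.card X / ∑ x, r x) := by
    rw [inv_mul_eq_div, ← log_inv, inv_div]
  rw [negMulLog, hlog] at this
  rw [← mul_le_mul_iff_of_pos_left (inv_pos.2 hn)]
  linarith

theorem ent_eq_sum_negMulLog {α : Type*} [Fintype α] (p : α → ℝ) :
    ent p = ∑ a, negMulLog (p a) := by
  simp [ent, negMulLog, sum_neg_distrib]

theorem IsPMF.le_one {X : Type*} [Fintype X] {p : X → ℝ} (hp : IsPMF p) (x : X) : p x ≤ 1 :=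
  hp.2 ▸ single_le_sum (fun y _ ↦ hp.1 y) (mem_univ x)

/-- L1 bound on the continuity of entropy: if `‖p - q‖₁ ≤ 1/2` then
`|H(p) - H(q)| ≤ ‖p-q‖₁ · ln(|X| / ‖p-q‖₁)`. -/
theorem stmt0 {X : Type*} [Fintype X] (p q : X → ℝ)
    (hp : IsPMF p) (hq : IsPMF q)
    (h : ∑ x, |p x - q x| ≤ 1 / 2) :
    |ent p - ent q| ≤
      (∑ x, |p x - q x|) * Real.log ((Fintype.card X : ℝ) / ∑ x, |p x - q x|) := by
  have hpq : ∀ x, |p x - q x| ≤ 1 / 2 := fun x ↦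
    (single_le_sum (fun y _ ↦ abs_nonneg (p y - q y)) (mem_univ x)).trans h
  calc |ent p - ent q| = |∑ x, (negMulLog (p x) - negMulLog (q x))| := by
        rw [ent_eq_sum_negMulLog, ent_eq_sum_negMulLog, sum_sub_distrib]
    _ ≤ ∑ x, |negMulLog (p x) - negMulLog (q x)| := abs_sum_le_sum_abs _ _
    _ ≤ ∑ x, negMulLog |p x - q x| := sum_le_sum fun x _ ↦
        abs_negMulLog_sub_le (hp.1 x) (hq.1 x) (hp.le_one x) (hq.le_one x) (hpq x)
    _ ≤ _ := sum_negMulLog_le_mul_log_card_div fun x ↦ abs_nonneg _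
end

section
/- Let d: X × X̂ → [0, d*] be a distortion measure on finite sets such that for each x there exists x̂₀(x) with d(x, x̂₀(x)) = 0, and let d̃ = min{d(x,x̂) : d(x,x̂) > 0} be the minimum nonzero distortion. For any probability distribution p on X, any D with 0 < D ≤ d̃/4, and any channel W with average distortion d(p,W) ≤ D, there exists a channel W₀ with average distortion d(p,W₀) = 0 such that Σ_x p(x) Σ_ŷ |W(ŷ|x) - W₀(ŷ|x)| ≤ 2D/d̃. -/
open BigOperators Finset Real

def IsChannel {X Xh : Type*} [Fintype X] [Fintype Xh] (W : X → Xh → ℝ) : Prop :=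
  (∀ x y, 0 ≤ W x y) ∧ ∀ x, ∑ y, W x y = 1

noncomputable def avgDist {X Xh : Type*} [Fintype X] [Fintype Xh]
    (d : X → Xh → ℝ) (p : X → ℝ) (W : X → Xh → ℝ) : ℝ :=
  ∑ x, ∑ y, p x * W x y * d x y

noncomputable def mutInfo {X Xh : Type*} [Fintype X] [Fintype Xh]
    (p : X → ℝ) (W : X → Xh → ℝ) : ℝ :=
  ent p + ent (fun y => ∑ x, p x * W x y) - ent (fun z : X × Xh => p z.1 * W z.1 z.2)

/-- The IID rate-distortion function `R(p, D)` (in nats). -/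
noncomputable def RD {X Xh : Type*} [Fintype X] [Fintype Xh]
    (d : X → Xh → ℝ) (p : X → ℝ) (D : ℝ) : ℝ :=
  sInf {r | ∃ W : X → Xh → ℝ, IsChannel W ∧ avgDist d p W ≤ D ∧ r = mutInfo p W}

/-- If every source letter has a zero-distortion reconstruction and `d̃` is the
minimum nonzero distortion, then any channel `W` with `d(p,W) ≤ D` (for
`0 < D ≤ d̃/4`) is within (p-weighted) L1 distance `2D/d̃` of a channel `W₀`
achieving zero average distortion. -/
theorem stmt6 {X Xh : Type*} [Fintype X] [Fintype Xh]
    (d : X → Xh → ℝ) (dstar dtil : ℝ)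
    (hd0 : ∀ x y, 0 ≤ d x y) (hdstar : ∀ x y, d x y ≤ dstar)
    (hzero : ∀ x, ∃ y, d x y = 0)
    (hdtil_pos : 0 < dtil) (hdtil : ∀ x y, d x y ≠ 0 → dtil ≤ d x y)
    (p : X → ℝ) (hp : IsPMF p)
    (D : ℝ) (hD : 0 < D) (hD' : D ≤ dtil / 4)
    (W : X → Xh → ℝ) (hW : IsChannel W) (hWD : avgDist d p W ≤ D) :
    ∃ W₀ : X → Xh → ℝ, IsChannel W₀ ∧ avgDist d p W₀ = 0 ∧
      ∑ x, p x * ∑ y, |W x y - W₀ x y| ≤ 2 * D / dtil := by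
  classical
  set y0 : X → Xh := fun x => (hzero x).choose with hy0def
  have hy0 : ∀ x, d x (y0 x) = 0 := fun x => (hzero x).choose_spec
  set s : X → ℝ := fun x => ∑ y ∈ Finset.univ.filter (fun y => ¬ d x y = 0), W x y with hs
  have hs_nonneg : ∀ x, 0 ≤ s x := fun x =>
    Finset.sum_nonneg fun y _ => hW.1 x y
  set W₀ : X → Xh → ℝ := fun x y =>
    (if d x y = 0 then W x y else 0) + (if y = y0 x then s x else 0) with hW₀def
  -- key bound: s x ≤ (1/dtil) * inner x
  have hinner_nonneg : ∀ x, 0 ≤ ∑ y, W x y * d x y := fun x =>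
    Finset.sum_nonneg fun y _ => mul_nonneg (hW.1 x y) (hd0 x y)
  have hs_le : ∀ x, dtil * s x ≤ ∑ y, W x y * d x y := by
    intro x
    rw [hs, Finset.mul_sum]
    calc ∑ y ∈ Finset.univ.filter (fun y => ¬ d x y = 0), dtil * W x y
        ≤ ∑ y ∈ Finset.univ.filter (fun y => ¬ d x y = 0), W x y * d x y := by
          apply Finset.sum_le_sum
          intro y hy
          rw [Finset.mem_filter] at hy
          rw [mul_comm]
          exact mul_le_mul_of_nonneg_left (hdtil x y hy.2) (hW.1 x y)
      _ ≤ ∑ y, W x y * d x y := by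
          apply Finset.sum_le_sum_of_subset_of_nonneg (Finset.filter_subset _ _)
          intro y _ _
          exact mul_nonneg (hW.1 x y) (hd0 x y)
  refine ⟨W₀, ⟨?_, ?_⟩, ?_, ?_⟩
  · intro x y
    apply add_nonneg
    · split_ifs
      · exact hW.1 x y
      · exact le_refl 0
    · split_ifs
      · exact hs_nonneg x
      · exact le_refl 0
  · intro x
    rw [Finset.sum_add_distrib]
    have h1 : ∑ y, (if d x y = 0 then W x y else 0)
        = ∑ y ∈ Finset.univ.filter (fun y => d x y = 0), W x y := by
      rw [Finset.sum_filter]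
    have h2 : ∑ y, (if y = y0 x then s x else 0) = s x := by
      simp [Finset.sum_ite_eq']
    rw [h1, h2, hs]
    rw [Finset.sum_filter_add_sum_filter_not Finset.univ (fun y => d x y = 0) (W x)]
    exact hW.2 x
  · unfold avgDist
    apply Finset.sum_eq_zero
    intro x _
    apply Finset.sum_eq_zero
    intro y _
    rcases eq_or_ne (d x y) 0 with h | h
    · rw [h, mul_zero]
    · have hyne : y ≠ y0 x := by
        intro he; exact h (he ▸ hy0 x)
      have : W₀ x y = 0 := by
        simp [hW₀def, h, hyne]
      rw [this, mul_zero, zero_mul]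
  · have hpoint : ∀ x, ∑ y, |W x y - W₀ x y| ≤ 2 * s x := by
      intro x
      have hb : ∀ y ∈ Finset.univ, |W x y - W₀ x y| ≤
          (if y = y0 x then s x else 0) + (if d x y = 0 then 0 else W x y) := by
        intro y _
        rcases eq_or_ne (d x y) 0 with h | h <;>
        rcases eq_or_ne y (y0 x) with h' | h'
        · subst h'
          simp [hW₀def, hy0 x, abs_of_nonneg (hs_nonneg x)]
        · simp [hW₀def, h, h']
        · exact absurd (h' ▸ hy0 x) h
        · simp [hW₀def, h, h', abs_of_nonneg (hW.1 x y)]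
      calc ∑ y, |W x y - W₀ x y|
          ≤ ∑ y, ((if y = y0 x then s x else 0) + (if d x y = 0 then 0 else W x y)) :=
            Finset.sum_le_sum hb
        _ = s x + s x := by
            rw [Finset.sum_add_distrib]
            congr 1
            · simp [Finset.sum_ite_eq']
            · simp only [hs, Finset.sum_filter, ite_not]
        _ = 2 * s x := by ring
    have hstep : ∀ x, p x * ∑ y, |W x y - W₀ x y| ≤ (2/dtil) * ∑ y, p x * W x y * d x y := by
      intro x
      have h1 : p x * ∑ y, |W x y - W₀ x y| ≤ p x * (2 * s x) :=
        mul_le_mul_of_nonneg_left (hpoint x) (hp.1 x)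
      have h2 : s x ≤ (1/dtil) * ∑ y, W x y * d x y := by
        rw [one_div, ← div_eq_inv_mul, le_div_iff₀ hdtil_pos, mul_comm]
        exact hs_le x
      have h3 : ∑ y, p x * W x y * d x y = p x * ∑ y, W x y * d x y := by
        rw [Finset.mul_sum]; congr 1; ext y; ring
      rw [h3]
      calc p x * ∑ y, |W x y - W₀ x y| ≤ p x * (2 * s x) := h1
        _ ≤ p x * (2 * ((1/dtil) * ∑ y, W x y * d x y)) := by
            apply mul_le_mul_of_nonneg_left _ (hp.1 x)
            linarith
        _ = (2/dtil) * (p x * ∑ y, W x y * d x y) := by ring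
    calc ∑ x, p x * ∑ y, |W x y - W₀ x y|
        ≤ ∑ x, (2/dtil) * ∑ y, p x * W x y * d x y := Finset.sum_le_sum fun x _ => hstep x
      _ = (2/dtil) * avgDist d p W := by rw [avgDist, Finset.mul_sum]
      _ ≤ (2/dtil) * D := by
          apply mul_le_mul_of_nonneg_left hWD
          positivity
      _ = 2 * D / dtil := by ring
end

section
/- Let X = {1,...,N} and let κ: (nonempty subsets of X) → [0,1] be a monotone set function with κ(X) = 1 induced by κ(V) = P(all m subsource outputs lie in V) for some joint distribution on X^m. Define C = {p ∈ P(X) : Σ_{i∈V} p(i) ≥ κ(V) for all V ⊆ X} and D = {p ∈ P(X) : p(x) = Σ_{V} β(V) f(x|V) where β(V) = P(the set of distinct outputs equals V) and each f(·|V) is a probability distribution supported on V}. Then C = D. -/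
open BigOperators Finset
open scoped Classical

/-- `κ(V) = P(x_l ∈ V for all l = 1,…,m)`. -/
noncomputable def kappa {N m : ℕ} (P : (Fin m → Fin N) → ℝ) (V : Finset (Fin N)) : ℝ :=
  ∑ v : Fin m → Fin N, if ∀ l, v l ∈ V then P v else 0

/-- `β(V) = P({x₁,…,x_m} = V)`, the probability the set of distinct outputs is `V`. -/
noncomputable def beta {N m : ℕ} (P : (Fin m → Fin N) → ℝ) (V : Finset (Fin N)) : ℝ :=
  ∑ v : Fin m → Fin N, if Finset.image v Finset.univ = V then P v else 0

section AuxBeta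

lemma beta_nonneg {N m : ℕ} (P : (Fin m → Fin N) → ℝ) (hP : ∀ v, 0 ≤ P v)
    (V : Finset (Fin N)) : 0 ≤ beta P V :=
  Finset.sum_nonneg fun v _ => by split <;> simp [hP v]

lemma beta_empty {N m : ℕ} (hm : 0 < m) (P : (Fin m → Fin N) → ℝ) :
    beta P (∅ : Finset (Fin N)) = 0 := by
  apply Finset.sum_eq_zero
  intro v _
  have : (Finset.image v Finset.univ).Nonempty :=
    ⟨v ⟨0, hm⟩, Finset.mem_image_of_mem v (Finset.mem_univ _)⟩
  rw [if_neg]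
  intro h
  rw [h] at this
  exact Finset.not_nonempty_empty this

lemma sum_beta {N m : ℕ} (P : (Fin m → Fin N) → ℝ) (hP : ∑ v, P v = 1) :
    ∑ V : Finset (Fin N), beta P V = 1 := by
  unfold beta
  rw [Finset.sum_comm, ← hP]
  apply Finset.sum_congr rfl
  intro v _
  rw [Finset.sum_ite_eq Finset.univ (Finset.image v Finset.univ) (fun _ => P v)]
  simp

lemma kappa_eq {N m : ℕ} (P : (Fin m → Fin N) → ℝ) (W : Finset (Fin N)) :
    kappa P W = ∑ V ∈ W.powerset, beta P V := by
  unfold kappa beta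
  rw [Finset.sum_comm]
  apply Finset.sum_congr rfl
  intro v _
  rw [Finset.sum_ite_eq W.powerset (Finset.image v Finset.univ) (fun _ => P v)]
  by_cases h : ∀ l, v l ∈ W
  · rw [if_pos h, if_pos]
    rw [Finset.mem_powerset]
    intro x hx
    obtain ⟨l, _, rfl⟩ := Finset.mem_image.mp hx
    exact h l
  · rw [if_neg h, if_neg]
    rw [Finset.mem_powerset]
    intro hsub
    exact h fun l => hsub (Finset.mem_image_of_mem v (Finset.mem_univ _))

end AuxBeta

noncomputable def Mmin {N : ℕ} (lam : Fin N → ℝ) (V : Finset (Fin N)) : ℝ :=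
  if h : V.Nonempty then V.inf' h lam else 0

lemma key_ineq {N : ℕ} (hN : 0 < N) (b : Finset (Fin N) → ℝ)
    (hbe : b ∅ = 0) (hb1 : ∑ V, b V = 1) (p : Fin N → ℝ) (hp1 : ∑ x, p x = 1)
    (hC : ∀ V : Finset (Fin N), ∑ W ∈ V.powerset, b W ≤ ∑ i ∈ V, p i)
    (lam : Fin N → ℝ) :
    ∑ V, b V * Mmin lam V ≤ ∑ x, p x * lam x := by
  have hne : Nonempty (Fin N) := ⟨⟨0, hN⟩⟩
  have huniv : (Finset.univ : Finset (Fin N)).Nonempty := Finset.univ_nonempty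
  suffices H : ∀ n (lam : Fin N → ℝ), (Finset.univ.image lam).card ≤ n →
      ∑ V, b V * Mmin lam V ≤ ∑ x, p x * lam x by
    exact H _ lam le_rfl
  intro n
  induction n with
  | zero =>
    intro lam hcard
    exfalso
    have : (Finset.univ.image lam).Nonempty := huniv.image lam
    have := Finset.card_pos.mpr this
    omega
  | succ n ih =>
    intro lam hcard
    set a := Finset.univ.inf' huniv lam with ha
    by_cases hconst : ∀ x, lam x = a
    · have h1 : ∑ V, b V * Mmin lam V = a := by
        have : ∀ V : Finset (Fin N), b V * Mmin lam V = b V * a := by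
          intro V
          rcases eq_or_ne V ∅ with rfl | hVne
          · simp [hbe]
          · have hV : V.Nonempty := Finset.nonempty_of_ne_empty hVne
            have : Mmin lam V = a := by
              unfold Mmin
              rw [dif_pos hV]
              apply le_antisymm
              · obtain ⟨x, hx⟩ := hV
                calc V.inf' ⟨x, hx⟩ lam ≤ lam x := Finset.inf'_le lam hx
                _ = a := hconst x
              · exact Finset.le_inf' _ _ fun y _ => le_of_eq (hconst y).symm
            rw [this]
        rw [Finset.sum_congr rfl (fun V _ => this V), ← Finset.sum_mul, hb1, one_mul]
      have h2 : ∑ x, p x * lam x = a := by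
        have : ∀ x, p x * lam x = p x * a := fun x => by rw [hconst x]
        rw [Finset.sum_congr rfl (fun x _ => this x), ← Finset.sum_mul, hp1, one_mul]
      rw [h1, h2]
    · push_neg at hconst
      obtain ⟨x0, hx0⟩ := hconst
      set S : Finset (Fin N) := Finset.univ.filter (fun x => lam x = a) with hS
      set T : Finset (Fin N) := Finset.univ.filter (fun x => lam x ≠ a) with hT
      have hTne : T.Nonempty := ⟨x0, by simp [hT, hx0]⟩
      set c := T.inf' hTne lam with hc
      have h_a_le : ∀ x, a ≤ lam x := fun x => Finset.inf'_le lam (Finset.mem_univ x)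
      have hac : a < c := by
        obtain ⟨i, hi, hieq⟩ := Finset.exists_mem_eq_inf' hTne lam
        rw [hc, hieq]
        rcases lt_or_eq_of_le (h_a_le i) with h | h
        · exact h
        · exfalso; exact (Finset.mem_filter.mp hi).2 h.symm
      set lam' : Fin N → ℝ := fun x => if lam x = a then c else lam x with hlam'
      have haim : a ∈ Finset.univ.image lam := by
        obtain ⟨i, hi, hieq⟩ := Finset.exists_mem_eq_inf' huniv lam
        rw [ha, hieq]; exact Finset.mem_image_of_mem lam hi
      have hcim : c ∈ Finset.univ.image lam := by
        obtain ⟨i, hi, hieq⟩ := Finset.exists_mem_eq_inf' hTne lam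
        rw [hc, hieq]; exact Finset.mem_image_of_mem lam (Finset.mem_univ i)
      have hsub : Finset.univ.image lam' ⊆ (Finset.univ.image lam).erase a := by
        intro y hy
        obtain ⟨x, _, rfl⟩ := Finset.mem_image.mp hy
        by_cases h : lam x = a
        · have : lam' x = c := by rw [hlam']; simp [h]
          rw [this]
          exact Finset.mem_erase.mpr ⟨hac.ne', hcim⟩
        · have : lam' x = lam x := by rw [hlam']; simp [h]
          rw [this]
          exact Finset.mem_erase.mpr ⟨h, Finset.mem_image_of_mem lam (Finset.mem_univ x)⟩
      have hcard' : (Finset.univ.image lam').card ≤ n := by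
        have h1 := Finset.card_le_card hsub
        have h2 : ((Finset.univ.image lam).erase a).card = (Finset.univ.image lam).card - 1 :=
          Finset.card_erase_of_mem haim
        have h3 : 1 ≤ (Finset.univ.image lam).card := Finset.card_pos.mpr (huniv.image lam)
        omega
      have IH := ih lam' hcard'
      have R2 : ∀ V : Finset (Fin N),
          b V * Mmin lam V = b V * Mmin lam' V -
            (c - a) * (if (V ∩ S).Nonempty then b V else 0) := by
        intro V
        rcases eq_or_ne V ∅ with rfl | hVne
        · simp [hbe]
        · have hV : V.Nonempty := Finset.nonempty_of_ne_empty hVne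
          by_cases hmeet : (V ∩ S).Nonempty
          · obtain ⟨x, hx⟩ := hmeet
            have hxV : x ∈ V := (Finset.mem_inter.mp hx).1
            have hxa : lam x = a := (Finset.mem_filter.mp (Finset.mem_inter.mp hx).2).2
            have hM : Mmin lam V = a := by
              unfold Mmin; rw [dif_pos hV]
              exact le_antisymm (hxa ▸ Finset.inf'_le lam hxV)
                (Finset.le_inf' _ _ fun y _ => h_a_le y)
            have hM' : Mmin lam' V = c := by
              unfold Mmin; rw [dif_pos hV]
              apply le_antisymm
              · have : lam' x = c := by rw [hlam']; simp [hxa]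
                exact this ▸ Finset.inf'_le lam' hxV
              · apply Finset.le_inf'
                intro y _
                rw [hlam']
                by_cases h : lam y = a
                · simp [h]
                · simp only [if_neg h]
                  exact Finset.inf'_le lam (by simp [hT, h] : y ∈ T)
            rw [hM, hM', if_pos ⟨x, hx⟩]
            ring
          · have heq : Mmin lam V = Mmin lam' V := by
              unfold Mmin; rw [dif_pos hV, dif_pos hV]
              apply Finset.inf'_congr hV rfl
              intro y hy
              have : lam y ≠ a := by
                intro h
                exact hmeet ⟨y, Finset.mem_inter.mpr ⟨hy, by simp [hS, h]⟩⟩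
              rw [hlam']; simp [this]
            rw [heq, if_neg hmeet]
            ring
      have R1 : ∑ x, p x * lam x = (∑ x, p x * lam' x) - (c - a) * ∑ x ∈ S, p x := by
        have : ∀ x, p x * lam x = p x * lam' x - (c - a) * (if lam x = a then p x else 0) := by
          intro x
          by_cases h : lam x = a
          · rw [hlam']; simp [h]; ring
          · rw [hlam']; simp [h]
        rw [Finset.sum_congr rfl (fun x _ => this x), Finset.sum_sub_distrib,
          ← Finset.mul_sum]
        congr 2
        rw [← Finset.sum_filter]
      have hbound : ∑ x ∈ S, p x ≤ ∑ V ∈ Finset.univ.filter (fun V => (V ∩ S).Nonempty), b V := by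
        have hsplit : ∑ V ∈ Finset.univ.filter (fun V => (V ∩ S).Nonempty), b V
            = 1 - ∑ V ∈ T.powerset, b V := by
          have : ∑ V ∈ Finset.univ.filter (fun V => (V ∩ S).Nonempty), b V
              + ∑ V ∈ Finset.univ.filter (fun V => ¬(V ∩ S).Nonempty), b V = 1 := by
            rw [Finset.sum_filter_add_sum_filter_not, hb1]
          have hpow : Finset.univ.filter (fun V : Finset (Fin N) => ¬(V ∩ S).Nonempty)
              = T.powerset := by
            ext V
            simp only [Finset.mem_filter, Finset.mem_univ, true_and, Finset.mem_powerset,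
              Finset.not_nonempty_iff_eq_empty]
            constructor
            · intro h x hx
              by_contra hxT
              have hxS : x ∈ S := by
                simp only [hS, Finset.mem_filter, Finset.mem_univ, true_and]
                by_contra hne2
                exact hxT (by simp [hT, hne2])
              have : x ∈ V ∩ S := Finset.mem_inter.mpr ⟨hx, hxS⟩
              rw [h] at this
              exact Finset.notMem_empty x this
            · intro h
              rw [Finset.eq_empty_iff_forall_notMem]
              intro x hx
              obtain ⟨hxV, hxS⟩ := Finset.mem_inter.mp hx
              have : lam x ≠ a := (Finset.mem_filter.mp (h hxV)).2
              exact this (Finset.mem_filter.mp hxS).2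
          rw [hpow] at this
          linarith
        have hT' : ∑ V ∈ T.powerset, b V ≤ ∑ i ∈ T, p i := hC T
        have hps : ∑ x ∈ S, p x + ∑ x ∈ T, p x = 1 := by
          have : T = Finset.univ.filter (fun x => ¬ (lam x = a)) := by
            ext x; simp [hT]
          rw [hS, this, Finset.sum_filter_add_sum_filter_not, hp1]
        rw [hsplit]
        linarith
      have hca : (0:ℝ) < c - a := sub_pos.mpr hac
      calc ∑ V, b V * Mmin lam V
          = ∑ V, (b V * Mmin lam' V - (c - a) * (if (V ∩ S).Nonempty then b V else 0)) :=
            Finset.sum_congr rfl (fun V _ => R2 V)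
        _ = (∑ V, b V * Mmin lam' V)
            - (c - a) * ∑ V ∈ Finset.univ.filter (fun V => (V ∩ S).Nonempty), b V := by
            rw [Finset.sum_sub_distrib, ← Finset.mul_sum, Finset.sum_filter]
        _ ≤ (∑ x, p x * lam' x) - (c - a) * ∑ x ∈ S, p x := by
            have := mul_le_mul_of_nonneg_left hbound (le_of_lt hca)
            linarith
        _ = ∑ x, p x * lam x := R1.symm

def Ksel (N : ℕ) : Set (Finset (Fin N) → Fin N → ℝ) :=
  {f | ∀ V, (∀ x, 0 ≤ f V x) ∧ (∀ x, x ∉ V → f V x = 0) ∧ (V.Nonempty → ∑ x, f V x = 1)}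

noncomputable def Lsel {N : ℕ} (b : Finset (Fin N) → ℝ) (f : Finset (Fin N) → Fin N → ℝ) :
    Fin N → ℝ := fun x => ∑ V, b V * f V x

lemma continuous_Lsel {N : ℕ} (b : Finset (Fin N) → ℝ) : Continuous (Lsel b) := by
  apply continuous_pi
  intro x
  apply continuous_finset_sum
  intro V _
  exact continuous_const.mul ((continuous_apply x).comp (continuous_apply V))

lemma convex_Ksel (N : ℕ) : Convex ℝ (Ksel N) := by
  intro f hf g hg t s ht hs hts
  intro V
  obtain ⟨hf1, hf2, hf3⟩ := hf V
  obtain ⟨hg1, hg2, hg3⟩ := hg V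
  refine ⟨?_, ?_, ?_⟩
  · intro x
    have : (t • f + s • g) V x = t * f V x + s * g V x := rfl
    rw [this]
    exact add_nonneg (mul_nonneg ht (hf1 x)) (mul_nonneg hs (hg1 x))
  · intro x hx
    have : (t • f + s • g) V x = t * f V x + s * g V x := rfl
    rw [this, hf2 x hx, hg2 x hx]; ring
  · intro hV
    have : ∀ x, (t • f + s • g) V x = t * f V x + s * g V x := fun x => rfl
    simp_rw [this]
    rw [Finset.sum_add_distrib, ← Finset.mul_sum, ← Finset.mul_sum, hf3 hV, hg3 hV]
    linarith

lemma isClosed_Ksel (N : ℕ) : IsClosed (Ksel N) := by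
  have h1 : Ksel N = (⋂ (V : Finset (Fin N)), ⋂ (x : Fin N), {f : Finset (Fin N) → Fin N → ℝ | 0 ≤ f V x})
      ∩ ((⋂ (V : Finset (Fin N)), ⋂ (x : Fin N), {f : Finset (Fin N) → Fin N → ℝ | x ∉ V → f V x = 0})
      ∩ (⋂ (V : Finset (Fin N)), {f : Finset (Fin N) → Fin N → ℝ | V.Nonempty → ∑ x, f V x = 1})) := by
    ext f
    simp only [Ksel, Set.mem_setOf_eq, Set.mem_inter_iff, Set.mem_iInter]
    constructor
    · intro h
      exact ⟨fun V x => (h V).1 x, fun V x => (h V).2.1 x, fun V => (h V).2.2⟩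
    · intro ⟨a, b, c⟩ V
      exact ⟨fun x => a V x, fun x => b V x, c V⟩
  rw [h1]
  have heval : ∀ (V : Finset (Fin N)) (x : Fin N),
      Continuous (fun f : Finset (Fin N) → Fin N → ℝ => f V x) :=
    fun V x => (continuous_apply x).comp (continuous_apply V)
  refine IsClosed.inter ?_ (IsClosed.inter ?_ ?_)
  · exact isClosed_iInter fun V => isClosed_iInter fun x =>
      isClosed_le continuous_const (heval V x)
  · refine isClosed_iInter fun V => isClosed_iInter fun x => ?_
    by_cases hx : x ∈ V
    · convert isClosed_univ
      ext f; simp [hx]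
    · have : {f : Finset (Fin N) → Fin N → ℝ | x ∉ V → f V x = 0}
          = {f : Finset (Fin N) → Fin N → ℝ | f V x = 0} := by
        ext f; simp [hx]
      rw [this]
      exact isClosed_eq (heval V x) continuous_const
  · refine isClosed_iInter fun V => ?_
    by_cases hV : V.Nonempty
    · have : {f : Finset (Fin N) → Fin N → ℝ | V.Nonempty → ∑ x, f V x = 1}
          = {f : Finset (Fin N) → Fin N → ℝ | ∑ x, f V x = 1} := by
        ext f; simp [hV]
      rw [this]
      exact isClosed_eq (continuous_finset_sum _ fun x _ => heval V x) continuous_const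
    · convert isClosed_univ
      ext f; simp [hV]

lemma isCompact_Ksel (N : ℕ) : IsCompact (Ksel N) := by
  apply IsCompact.of_isClosed_subset
    (isCompact_univ_pi fun V => isCompact_univ_pi fun x => isCompact_Icc (a := (0:ℝ)) (b := 1))
    (isClosed_Ksel N)
  intro f hf
  rw [Set.mem_univ_pi]
  intro V
  rw [Set.mem_univ_pi]
  intro x
  obtain ⟨h1, h2, h3⟩ := hf V
  refine ⟨h1 x, ?_⟩
  by_cases hV : V.Nonempty
  · calc f V x ≤ ∑ y, f V y := Finset.single_le_sum (fun y _ => h1 y) (Finset.mem_univ x)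
    _ = 1 := h3 hV
  · rw [h2 x (by simp [Finset.not_nonempty_iff_eq_empty.mp hV])]
    norm_num

lemma clm_expand {N : ℕ} (g : (Fin N → ℝ) →L[ℝ] ℝ) (w : Fin N → ℝ) :
    g w = ∑ x, w x * g (Pi.single x 1) := by
  conv_lhs => rw [← Finset.univ_sum_single w]
  rw [map_sum]
  apply Finset.sum_congr rfl
  intro x _
  have : Pi.single x (w x) = w x • (Pi.single x 1 : Fin N → ℝ) := by
    funext j
    by_cases hj : j = x <;> simp [Pi.single_apply, hj]
  rw [this, map_smul, smul_eq_mul]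

lemma exists_sel {N : ℕ} (hN : 0 < N) (b : Finset (Fin N) → ℝ)
    (hbe : b ∅ = 0) (hb1 : ∑ V, b V = 1) (p : Fin N → ℝ) (hp1 : ∑ x, p x = 1)
    (hC : ∀ V : Finset (Fin N), ∑ W ∈ V.powerset, b W ≤ ∑ i ∈ V, p i) :
    ∃ f ∈ Ksel N, ∀ x, p x = Lsel b f x := by
  by_contra h
  push_neg at h
  have hpE : p ∉ Lsel b '' Ksel N := by
    rintro ⟨f, hfK, hfe⟩
    obtain ⟨x, hx⟩ := h f hfK
    exact hx (congrFun hfe x).symm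
  have himc : Convex ℝ (Lsel b '' Ksel N) := by
    rintro q1 ⟨f1, hf1, rfl⟩ q2 ⟨f2, hf2, rfl⟩ t s ht hs hts
    refine ⟨t • f1 + s • f2, convex_Ksel N hf1 hf2 ht hs hts, ?_⟩
    funext x
    show Lsel b _ x = (t • Lsel b f1 + s • Lsel b f2) x
    simp only [Lsel, Pi.add_apply, Pi.smul_apply, smul_eq_mul]
    rw [Finset.mul_sum, Finset.mul_sum, ← Finset.sum_add_distrib]
    apply Finset.sum_congr rfl
    intro V _
    ring
  have himcl : IsClosed (Lsel b '' Ksel N) :=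
    ((isCompact_Ksel N).image (continuous_Lsel b)).isClosed
  obtain ⟨g, u, hgu, hup⟩ := geometric_hahn_banach_closed_point himc himcl hpE
  set lam : Fin N → ℝ := fun x => -(g (Pi.single x 1)) with hlam
  have hgw : ∀ w : Fin N → ℝ, g w = -∑ x, w x * lam x := by
    intro w
    rw [clm_expand g w, ← Finset.sum_neg_distrib]
    apply Finset.sum_congr rfl
    intro x _
    rw [hlam]; ring
  set fmin : Finset (Fin N) → Fin N → ℝ := fun V x =>
    if h : V.Nonempty then
      (if x = Classical.choose (Finset.exists_min_image V lam h) then 1 else 0)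
    else 0 with hfmin
  have hfminK : fmin ∈ Ksel N := by
    intro V
    refine ⟨?_, ?_, ?_⟩
    · intro x
      rw [hfmin]
      dsimp only
      split
      · split <;> norm_num
      · norm_num
    · intro x hx
      rw [hfmin]
      dsimp only
      split
      case isTrue hV =>
        obtain ⟨hmem, -⟩ := Classical.choose_spec (Finset.exists_min_image V lam hV)
        rw [if_neg]
        intro hxe
        rw [hxe] at hx
        exact hx hmem
      case isFalse => rfl
    · intro hV
      rw [hfmin]
      dsimp only
      rw [Finset.sum_congr rfl (fun x _ => dif_pos hV)]
      rw [Finset.sum_ite_eq' Finset.univ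
        (Classical.choose (Finset.exists_min_image V lam hV)) (fun _ => (1:ℝ))]
      simp
  set q := Lsel b fmin with hq
  have hqE : q ∈ Lsel b '' Ksel N := ⟨fmin, hfminK, rfl⟩
  have h1 : g q < u := hgu q hqE
  have h2 : u < g p := hup
  have hqsum : ∑ x, q x * lam x = ∑ V, b V * Mmin lam V := by
    rw [hq]
    simp only [Lsel]
    simp_rw [Finset.sum_mul]
    rw [Finset.sum_comm]
    apply Finset.sum_congr rfl
    intro V _
    by_cases hV : V.Nonempty
    · obtain ⟨hmem, hmin⟩ := Classical.choose_spec (Finset.exists_min_image V lam hV)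
      set cc := Classical.choose (Finset.exists_min_image V lam hV) with hcc
      have hterm : ∀ x, b V * fmin V x * lam x = b V * (if x = cc then lam cc else 0) := by
        intro x
        rw [hfmin]
        dsimp only
        rw [dif_pos hV]
        by_cases hxc : x = cc
        · rw [if_pos hxc, if_pos hxc, hxc]; ring
        · rw [if_neg hxc, if_neg hxc]; ring
      rw [Finset.sum_congr rfl (fun x _ => hterm x), ← Finset.mul_sum,
        Finset.sum_ite_eq' Finset.univ cc (fun _ => lam cc), if_pos (Finset.mem_univ cc)]
      congr 1
      unfold Mmin
      rw [dif_pos hV]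
      exact (le_antisymm (Finset.inf'_le lam hmem) (Finset.le_inf' hV lam hmin)).symm
    · have hVe : V = ∅ := Finset.not_nonempty_iff_eq_empty.mp hV
      subst hVe
      have : ∀ x, b ∅ * fmin ∅ x * lam x = 0 := by
        intro x
        rw [hfmin]
        dsimp only
        rw [dif_neg (by simp)]
        ring
      rw [Finset.sum_congr rfl (fun x _ => this x), Finset.sum_const, smul_zero]
      unfold Mmin
      rw [dif_neg (by simp)]
      ring
  have hkey : ∑ V, b V * Mmin lam V ≤ ∑ x, p x * lam x :=
    key_ineq hN b hbe hb1 p hp1 hC lam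
  have hgp : g p = -∑ x, p x * lam x := hgw p
  have hgq : g q = -∑ x, q x * lam x := hgw q
  rw [hgp] at h2
  rw [hgq, hqsum] at h1
  linarith

/-- The set `C` of distributions dominating `κ` on every subset equals the set `D` of
distributions simulable by randomized selection rules `f(·|V)` supported on `V`. -/
theorem stmt13 (N m : ℕ) (hN : 0 < N) (hm : 0 < m)
    (P : (Fin m → Fin N) → ℝ) (hP : IsPMF P) :
    {p : Fin N → ℝ | IsPMF p ∧ ∀ V : Finset (Fin N), kappa P V ≤ ∑ i ∈ V, p i} =
    {p : Fin N → ℝ | IsPMF p ∧ ∃ f : Finset (Fin N) → Fin N → ℝ,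
      (∀ V : Finset (Fin N),
        (∀ x, 0 ≤ f V x) ∧ (∀ x, x ∉ V → f V x = 0) ∧ (V.Nonempty → ∑ x, f V x = 1)) ∧
      ∀ x, p x = ∑ V : Finset (Fin N), beta P V * f V x} := by
  ext p
  simp only [Set.mem_setOf_eq]
  constructor
  · rintro ⟨hpmf, hC⟩
    refine ⟨hpmf, ?_⟩
    have hC' : ∀ V : Finset (Fin N), ∑ W ∈ V.powerset, beta P W ≤ ∑ i ∈ V, p i := by
      intro V
      rw [← kappa_eq]
      exact hC V
    obtain ⟨f, hfK, hfe⟩ := exists_sel hN (beta P) (beta_empty hm P) (sum_beta P hP.2)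
      p hpmf.2 hC'
    exact ⟨f, hfK, hfe⟩
  · rintro ⟨hpmf, f, hf, hrep⟩
    refine ⟨hpmf, fun W => ?_⟩
    rw [kappa_eq]
    have hsum : ∑ i ∈ W, p i = ∑ V, beta P V * ∑ i ∈ W, f V i := by
      rw [Finset.sum_congr rfl (fun i _ => hrep i), Finset.sum_comm]
      apply Finset.sum_congr rfl
      intro V _
      rw [Finset.mul_sum]
    rw [hsum]
    have hpow : W.powerset = Finset.univ.filter (fun V => V ⊆ W) := by
      ext V; simp
    rw [hpow, Finset.sum_filter]
    apply Finset.sum_le_sum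
    intro V _
    have hb0 : 0 ≤ beta P V := beta_nonneg P hP.1 V
    have hfs0 : 0 ≤ ∑ i ∈ W, f V i := Finset.sum_nonneg fun i _ => (hf V).1 i
    by_cases hVW : V ⊆ W
    · rw [if_pos hVW]
      rcases Finset.eq_empty_or_nonempty V with rfl | hV
      · rw [beta_empty hm P]
        simp
      · have h1 : ∑ i ∈ V, f V i = ∑ i, f V i :=
          Finset.sum_subset (Finset.subset_univ V) (fun x _ hx => (hf V).2.1 x hx)
        have h2 : (1:ℝ) ≤ ∑ i ∈ W, f V i := by
          calc (1:ℝ) = ∑ i, f V i := ((hf V).2.2 hV).symm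
          _ = ∑ i ∈ V, f V i := h1.symm
          _ ≤ ∑ i ∈ W, f V i :=
            Finset.sum_le_sum_of_subset_of_nonneg hVW (fun i _ _ => (hf V).1 i)
        calc beta P V = beta P V * 1 := (mul_one _).symm
        _ ≤ beta P V * ∑ i ∈ W, f V i := mul_le_mul_of_nonneg_left h2 hb0
    · rw [if_neg hVW]
      exact mul_nonneg hb0 hfs0
end

section
/- Let x₁,...,x_n be IID random variables on a finite set X with distribution p, and let p_{x^n} be their empirical distribution. Then for any γ > 0, P(||p_{x^n} - p||_1 ≥ γ) ≤ 2^{|X|} · exp(-nγ²/2). -/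
open MeasureTheory ProbabilityTheory BigOperators Finset

/-- Empirical distribution of `n` samples: `emp x ω a = (1/n)·#{k : x_k(ω) = a}`. -/
noncomputable def emp {X Ω : Type*} [Fintype X] [DecidableEq X]
    (n : ℕ) (x : Fin n → Ω → X) (ω : Ω) : X → ℝ :=
  fun a => (∑ k, if x k ω = a then (1 : ℝ) else 0) / n

/-!
For probability vectors `e` and `p`, `‖e - p‖₁ = 2 (e(A) - p(A))` with `A = {a | p a < e a}`.
Hence the event `γ ≤ ‖p_{xⁿ} - p‖₁` lies in the union, over the `2^|X|` subsets `A ⊆ X`, of the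
events `nγ/2 ≤ ∑ₖ (1[x_k ∈ A] - p(A))`, and Hoeffding's inequality for the independent
`[0, 1]`-valued indicators `1[x_k ∈ A]` bounds each of them by `exp(-nγ²/2)`.
-/

lemma sum_abs_sub_eq_two_mul_sum_filter_lt {ι : Type*} [Fintype ι] (e p : ι → ℝ)
    (h : ∑ i, (e i - p i) = 0) :
    ∑ i, |e i - p i| = 2 * ∑ i with p i < e i, (e i - p i) := by
  have habs : ∀ d : ℝ, |d| = 2 * max d 0 - d := fun d => by
    rcases le_total d 0 with hd | hd
    · rw [abs_of_nonpos hd, max_eq_right hd]; ring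
    · rw [abs_of_nonneg hd, max_eq_left hd]; ring
  rw [sum_congr rfl fun i _ => habs (e i - p i), sum_sub_distrib, h, sub_zero, ← mul_sum,
    sum_filter]
  congr 1
  refine sum_congr rfl fun i _ => ?_
  split_ifs with hi
  · exact max_eq_left (sub_pos.2 hi).le
  · exact max_eq_right (sub_nonpos.2 (not_lt.1 hi))

lemma natCast_mul_sum_emp_sub {X Ω : Type*} [Fintype X] [DecidableEq X] {n : ℕ} (hn : n ≠ 0)
    (x : Fin n → Ω → X) (ω : Ω) (p : X → ℝ) (A : Finset X) :
    n * ∑ a ∈ A, (emp n x ω a - p a) =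
      ∑ k, ((A : Set X).indicator 1 (x k ω) - ∑ a ∈ A, p a) := by
  have hcount : ∑ a ∈ A, emp n x ω a = (∑ k, (A : Set X).indicator 1 (x k ω)) / n := by
    simp only [emp, ← sum_div, Set.indicator_apply, mem_coe, Pi.one_apply]
    rw [sum_comm]
    simp_rw [sum_ite_eq]
  rw [sum_sub_distrib, hcount, sum_sub_distrib, sum_const, card_univ, Fintype.card_fin,
    nsmul_eq_mul]
  field_simp

lemma measureReal_preimage_finset_eq_sum {Ω X : Type*} [MeasurableSpace Ω] [MeasurableSpace X]
    [MeasurableSingletonClass X] {μ : Measure Ω} [IsFiniteMeasure μ] {f : Ω → X}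
    (hf : Measurable f) {p : X → ℝ} (hp : ∀ a, 0 ≤ p a)
    (hfp : ∀ a, μ {ω | f ω = a} = ENNReal.ofReal (p a)) (A : Finset X) :
    μ.real (f ⁻¹' A) = ∑ a ∈ A, p a := by
  rw [← sum_measureReal_preimage_singleton A fun a _ => hf (measurableSet_singleton a)]
  refine sum_congr rfl fun a _ => ?_
  rw [measureReal_def, Set.preimage, ← ENNReal.toReal_ofReal (hp a), ← hfp a]
  rfl

lemma measureReal_sum_indicator_sub_ge_le {Ω X ι : Type*} [MeasurableSpace Ω]
    {mX : MeasurableSpace X} [Fintype ι] {μ : Measure Ω} [IsProbabilityMeasure μ] {x : ι → Ω → X}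
    (hxm : ∀ k, Measurable (x k)) (hindep : iIndepFun (m := fun _ => mX) x μ)
    {S : Set X} (hS : MeasurableSet S) {q : ℝ} (hq : ∀ k, μ.real (x k ⁻¹' S) = q)
    {ε : ℝ} (hε : 0 ≤ ε) :
    μ.real {ω | ε ≤ ∑ k, (S.indicator 1 (x k ω) - q)} ≤
      Real.exp (-2 * ε ^ 2 / Fintype.card ι) := by
  have hind : Measurable (S.indicator (1 : X → ℝ)) := measurable_one.indicator hS
  have hmean : ∀ k, μ[fun ω => S.indicator (1 : X → ℝ) (x k ω)] = q := fun k => by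
    rw [← hq k, ← integral_indicator_one (μ := μ) (hxm k hS)]
    rfl
  have hsubG : ∀ k ∈ (univ : Finset ι),
      HasSubgaussianMGF (fun ω => S.indicator 1 (x k ω) - q) ((‖(1 : ℝ) - 0‖₊ / 2) ^ 2) μ :=
    fun k _ => by
      have := hasSubgaussianMGF_of_mem_Icc (μ := μ) (a := 0) (b := 1)
        (hind.comp (hxm k)).aemeasurable (ae_of_all _ fun ω => ?_)
      · simpa only [Function.comp_def, hmean k] using this
      · exact ⟨Set.indicator_nonneg (fun _ _ => zero_le_one) _,
          Set.indicator_le_self' (fun _ _ => zero_le_one) _⟩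
  refine (HasSubgaussianMGF.measure_sum_ge_le_of_iIndepFun
    (hindep.comp (fun _ y => S.indicator 1 y - q) fun _ => hind.sub_const q) hsubG hε).trans_eq ?_
  congr 1
  simp only [sum_const, card_univ, nsmul_eq_mul, NNReal.coe_mul, NNReal.coe_natCast]
  norm_num
  rw [show 2 * ((Fintype.card ι : ℝ) * (1 / 4)) = Fintype.card ι / 2 by ring,
    div_div_eq_mul_div]
  ring

/-- L1 concentration of the empirical distribution of `n` IID samples:
`P(‖p_{xⁿ} - p‖₁ ≥ γ) ≤ 2^{|X|}·exp(-nγ²/2)`. -/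
theorem stmt18 {Ω X : Type*} [MeasurableSpace Ω] {mX : MeasurableSpace X}
    [Fintype X] [DecidableEq X] [MeasurableSingletonClass X]
    (μ : Measure Ω) [IsProbabilityMeasure μ]
    (p : X → ℝ) (hp : (∀ a, 0 ≤ p a) ∧ ∑ a, p a = 1)
    (n : ℕ) (hn : 0 < n) (x : Fin n → Ω → X)
    (hxm : ∀ k, Measurable (x k))
    (hindep : iIndepFun (m := fun _ => mX) x μ)
    (hid : ∀ k a, μ {ω | x k ω = a} = ENNReal.ofReal (p a))
    (γ : ℝ) (hγ : 0 < γ) :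
    μ {ω | γ ≤ ∑ a, |emp n x ω a - p a|} ≤
      ENNReal.ofReal ((2 : ℝ) ^ (Fintype.card X) * Real.exp (-(n : ℝ) * γ ^ 2 / 2)) := by
  obtain ⟨hp0, hp1⟩ := hp
  have hn0 : (n : ℝ) ≠ 0 := Nat.cast_ne_zero.2 hn.ne'
  set E : Finset X → Set Ω := fun A =>
    {ω | n * γ / 2 ≤ ∑ k, ((A : Set X).indicator 1 (x k ω) - ∑ a ∈ A, p a)}
  have hsub : {ω | γ ≤ ∑ a, |emp n x ω a - p a|} ⊆ ⋃ A, E A := by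
    intro ω hω
    have hsum : ∑ a, (emp n x ω a - p a) = 0 := by
      have := natCast_mul_sum_emp_sub hn.ne' x ω p univ
      simpa [hp1, hn0] using this
    rw [Set.mem_ofPred_eq, sum_abs_sub_eq_two_mul_sum_filter_lt _ _ hsum] at hω
    refine Set.mem_iUnion.2 ⟨({a | p a < emp n x ω a} : Finset X), ?_⟩
    rw [Set.mem_ofPred_eq, ← natCast_mul_sum_emp_sub hn.ne']
    nlinarith
  have hE : ∀ A, μ.real (E A) ≤ Real.exp (-(n : ℝ) * γ ^ 2 / 2) := fun A => by
    refine (measureReal_sum_indicator_sub_ge_le hxm hindep A.measurableSet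
      (fun k => measureReal_preimage_finset_eq_sum (hxm k) hp0 (hid k) A)
      (by positivity)).trans_eq ?_
    congr 1
    simp only [Fintype.card_fin]
    field_simp
  rw [← ofReal_measureReal]
  refine ENNReal.ofReal_le_ofReal ?_
  calc μ.real {ω | γ ≤ ∑ a, |emp n x ω a - p a|}
      ≤ μ.real (⋃ A, E A) := measureReal_mono hsub
    _ ≤ ∑ A, μ.real (E A) := measureReal_iUnion_fintype_le E
    _ ≤ ∑ _A : Finset X, Real.exp (-(n : ℝ) * γ ^ 2 / 2) := sum_le_sum fun A _ => hE A
    _ = _ := by simp [Fintype.card_finset]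
end
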